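/- arXiv:1806.02951 — 8 statements merged into one kernel-verified Lean document; each statement's English description precedes it below -/
import Mathlib

section
/- Let q be an odd prime power and let C be a linear code of length n over R = F_q[u]/(u^2-u). Define the Gray map phi: R -> F_q^2 by phi(a+ub) = (-b, 2a+b), extended coordinatewise to R^n -> F_q^{2n}. Then phi(C^perp) = phi(C)^perp, where duals are taken with respect to the standard Euclidean inner products over R and F_q respectively. -/
open Polynomial

set_option maxHeartbeats 1000000 in
/-- For the Gray map `φ(a + u b) = (-b, 2a + b)` (the `F`-linear map
with `φ 1 = (0,2)` and `φ u = (-1,1)`), applied coordinatewise, one has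
`φ(C^⊥) = φ(C)^⊥` for every linear code `C` of length `n` over `R = F_q[u]/(u^2-u)`,
`q` odd. -/
theorem stmt_7 (q : ℕ) (hq : IsPrimePow q) (hodd : Odd q)
    (F : Type) [Field F] [Fintype F] (hF : Fintype.card F = q) (n : ℕ)
    (φ : AdjoinRoot (X ^ 2 - X : F[X]) →ₗ[F] F × F)
    (hφ1 : φ 1 = (0, 2)) (hφu : φ (AdjoinRoot.root (X ^ 2 - X : F[X])) = (-1, 1))
    (C : Submodule (AdjoinRoot (X ^ 2 - X : F[X]))
          (Fin n → AdjoinRoot (X ^ 2 - X : F[X]))) :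
    (fun v (i : Fin n) => φ (v i)) ''
        {y : Fin n → AdjoinRoot (X ^ 2 - X : F[X]) | ∀ x ∈ C, ∑ i, x i * y i = 0}
      = {w : Fin n → F × F |
          ∀ v ∈ (fun v (i : Fin n) => φ (v i)) ''
              (C : Set (Fin n → AdjoinRoot (X ^ 2 - X : F[X]))),
            ∑ i, ((v i).1 * (w i).1 + (v i).2 * (w i).2) = 0} := by
  classical
  set u : AdjoinRoot (X ^ 2 - X : F[X]) := AdjoinRoot.root _ with hu
  -- 2 ≠ 0 in F
  have two_ne : (2 : F) ≠ 0 := by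
    intro h2
    have hc2 : ringChar F ∣ 2 := by
      have h : ((2 : ℕ) : F) = 0 := by exact_mod_cast h2
      exact (ringChar.spec F 2).mp h
    have hcq : ringChar F ∣ q := by
      have h : ((q : ℕ) : F) = 0 := by rw [← hF]; exact FiniteField.cast_card_eq_zero F
      exact (ringChar.spec F q).mp h
    have hne1 : ringChar F ≠ 1 := CharP.ringChar_ne_one
    rcases (Nat.dvd_prime Nat.prime_two).mp hc2 with h | h
    · exact hne1 h
    · rw [h] at hcq
      have := Nat.odd_iff.mp hodd
      omega
  -- u * u = u
  have usq : u * u = u := by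
    have h : AdjoinRoot.mk (X ^ 2 - X : F[X]) (X ^ 2 - X) = 0 := AdjoinRoot.mk_self
    rw [map_sub, map_pow, AdjoinRoot.mk_X, sub_eq_zero] at h
    rw [← pow_two]
    exact h
  -- representation
  have hrep : ∀ r : AdjoinRoot (X ^ 2 - X : F[X]), ∃ a b : F, r = a • 1 + b • u := by
    intro r
    obtain ⟨p, rfl⟩ := AdjoinRoot.mk_surjective r
    have hm : (X ^ 2 - X : F[X]).Monic := by
      apply Polynomial.monic_X_pow_sub
      simpa using Polynomial.degree_X_le
    have hd : (X ^ 2 - X : F[X]).natDegree = 2 := by compute_degree!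
    have hne1 : (X ^ 2 - X : F[X]) ≠ 1 := by
      intro h; rw [h] at hd; simp at hd
    have h1 : AdjoinRoot.mk (X ^ 2 - X : F[X]) p = AdjoinRoot.mk _ (p %ₘ (X ^ 2 - X)) := by
      rw [Polynomial.modByMonic_eq_sub_mul_div _ (X ^ 2 - X : F[X])]
      simp [mul_comm]
    have h2 : (p %ₘ (X ^ 2 - X)).natDegree ≤ 1 := by
      have := Polynomial.natDegree_modByMonic_lt p hm hne1
      omega
    refine ⟨(p %ₘ (X ^ 2 - X)).coeff 0, (p %ₘ (X ^ 2 - X)).coeff 1, ?_⟩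
    rw [h1]
    conv_lhs => rw [Polynomial.eq_X_add_C_of_natDegree_le_one h2]
    rw [map_add, map_mul, AdjoinRoot.mk_C, AdjoinRoot.mk_C, AdjoinRoot.mk_X,
      Algebra.smul_def, Algebra.smul_def, mul_one]
    rw [AdjoinRoot.algebraMap_eq]
    ring
  -- value of φ on a • 1 + b • u
  have hφab : ∀ a b : F, φ (a • (1 : AdjoinRoot (X ^ 2 - X : F[X])) + b • u) = (-b, 2 * a + b) := by
    intro a b
    rw [map_add, map_smul, map_smul, hφ1, hφu]
    ext
    · simp
    · simp [smul_eq_mul]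
      ring
  -- multiplication formula
  have hmul : ∀ a b c d : F,
      (a • (1 : AdjoinRoot (X ^ 2 - X : F[X])) + b • u) * (c • 1 + d • u)
        = (a * c) • (1 : AdjoinRoot (X ^ 2 - X : F[X])) + (a * d + b * c + b * d) • u := by
    intro a b c d
    rw [add_mul, mul_add, mul_add, smul_mul_smul, smul_mul_smul, smul_mul_smul, smul_mul_smul]
    simp only [one_mul, mul_one, usq]
    rw [add_smul, add_smul]
    abel
  -- key identity
  have key : ∀ x y : AdjoinRoot (X ^ 2 - X : F[X]),
      (φ x).1 * (φ y).1 + (φ x).2 * (φ y).2 = 2 * (φ (x * y)).2 := by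
    intro x y
    obtain ⟨a, b, rfl⟩ := hrep x
    obtain ⟨c, d, rfl⟩ := hrep y
    rw [hmul, hφab, hφab, hφab]
    simp only []
    ring
  -- vanishing criterion
  have szero : ∀ s : AdjoinRoot (X ^ 2 - X : F[X]),
      (φ s).2 = 0 → (φ (u * s)).2 = 0 → s = 0 := by
    intro s h1 h2
    obtain ⟨a, b, rfl⟩ := hrep s
    have hus : u * (a • (1 : AdjoinRoot (X ^ 2 - X : F[X])) + b • u)
        = (0 : F) • (1 : AdjoinRoot (X ^ 2 - X : F[X])) + (a + b) • u := by
      rw [mul_add, mul_smul_comm, mul_smul_comm, mul_one, usq, zero_smul, zero_add, ← add_smul]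
    rw [hφab] at h1
    rw [hus, hφab] at h2
    simp only [] at h1 h2
    have ha : a = 0 := by linear_combination h1 - h2
    have hb : b = 0 := by linear_combination h2 - ha
    rw [ha, hb]
    simp
  -- explicit preimage
  have hsurj : ∀ p : F × F,
      φ (((p.1 + p.2) / 2) • (1 : AdjoinRoot (X ^ 2 - X : F[X])) + (-p.1) • u) = p := by
    intro p
    rw [hφab]
    ext
    · simp
    · show 2 * ((p.1 + p.2) / 2) + -p.1 = p.2
      field_simp
      ring
  -- main argument
  ext w
  simp only [Set.mem_image, Set.mem_setOf_eq]
  constructor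
  · rintro ⟨y, hy, rfl⟩ v hv
    obtain ⟨x, hx, rfl⟩ := hv
    simp only []
    calc ∑ i, ((φ (x i)).1 * (φ (y i)).1 + (φ (x i)).2 * (φ (y i)).2)
        = ∑ i, 2 * (φ (x i * y i)).2 := Finset.sum_congr rfl (fun i _ => key _ _)
      _ = 2 * (φ (∑ i, x i * y i)).2 := by rw [map_sum, Prod.snd_sum, Finset.mul_sum]
      _ = 0 := by rw [hy x hx]; simp
  · intro hw
    set y : Fin n → AdjoinRoot (X ^ 2 - X : F[X]) :=
      fun i => (((w i).1 + (w i).2) / 2) • (1 : AdjoinRoot (X ^ 2 - X : F[X])) + (-(w i).1) • u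
      with hy
    have hwy : ∀ i, w i = φ (y i) := fun i => (hsurj (w i)).symm
    refine ⟨y, ?_, ?_⟩
    · intro x hx
      have hx1 := hw (fun i => φ (x i)) ⟨x, hx, rfl⟩
      have hx2 := hw (fun i => φ ((u • x) i)) ⟨u • x, C.smul_mem u hx, rfl⟩
      simp only [hwy] at hx1 hx2
      have e1 : 2 * (φ (∑ i, x i * y i)).2 = 0 := by
        rw [map_sum, Prod.snd_sum, Finset.mul_sum, ← hx1]
        exact Finset.sum_congr rfl (fun i _ => (key _ _).symm)
      have e2 : 2 * (φ (u * ∑ i, x i * y i)).2 = 0 := by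
        rw [Finset.mul_sum, map_sum, Prod.snd_sum, Finset.mul_sum, ← hx2]
        refine Finset.sum_congr rfl (fun i _ => ?_)
        have hre : (u • x) i = u * x i := rfl
        rw [hre, key (u * x i) (y i), mul_assoc]
      exact szero _ (by
          rcases mul_eq_zero.mp e1 with h | h
          · exact absurd h two_ne
          · exact h)
        (by
          rcases mul_eq_zero.mp e2 with h | h
          · exact absurd h two_ne
          · exact h)
    · funext i
      exact hsurj (w i)
end

section
/- Let q be an odd prime power and C a self-dual linear code of length n over R = F_q[u]/(u^2-u). Then the Gray image phi(C), where phi(a+ub) = (-b, 2a+b) applied coordinatewise, is a self-dual code of length 2n over F_q. -/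
open Polynomial

set_option maxHeartbeats 1000000 in
/-- If `C` is a self-dual linear code of length `n` over
`R = F_q[u]/(u^2-u)` (`q` odd), then its Gray image under
`φ(a + u b) = (-b, 2a + b)` (coordinatewise) is a self-dual code of length `2n`
over `F_q`. -/
theorem stmt_8 (q : ℕ) (hq : IsPrimePow q) (hodd : Odd q)
    (F : Type) [Field F] [Fintype F] (hF : Fintype.card F = q) (n : ℕ)
    (φ : AdjoinRoot (X ^ 2 - X : F[X]) →ₗ[F] F × F)
    (hφ1 : φ 1 = (0, 2)) (hφu : φ (AdjoinRoot.root (X ^ 2 - X : F[X])) = (-1, 1))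
    (C : Submodule (AdjoinRoot (X ^ 2 - X : F[X]))
          (Fin n → AdjoinRoot (X ^ 2 - X : F[X])))
    (hsd : (C : Set (Fin n → AdjoinRoot (X ^ 2 - X : F[X])))
        = {y : Fin n → AdjoinRoot (X ^ 2 - X : F[X]) | ∀ x ∈ C, ∑ i, x i * y i = 0}) :
    (fun v (i : Fin n) => φ (v i)) '' (C : Set (Fin n → AdjoinRoot (X ^ 2 - X : F[X])))
      = {w : Fin n → F × F |
          ∀ v ∈ (fun v (i : Fin n) => φ (v i)) ''
              (C : Set (Fin n → AdjoinRoot (X ^ 2 - X : F[X]))),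
            ∑ i, ((v i).1 * (w i).1 + (v i).2 * (w i).2) = 0} := by
  set R := AdjoinRoot (X ^ 2 - X : F[X]) with hR
  set u : R := AdjoinRoot.root (X ^ 2 - X : F[X]) with hu
  -- 2 ≠ 0 in F
  have htwo : (2 : F) ≠ 0 := by
    intro h
    have h2 : ringChar F ∣ 2 := by
      rw [← ringChar.spec F 2]
      exact_mod_cast h
    haveI := ringChar.charP F
    obtain ⟨m, hp, hcard⟩ := FiniteField.card F (ringChar F)
    have hchar : ringChar F = 2 := (Nat.prime_dvd_prime_iff_eq hp Nat.prime_two).mp h2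
    rw [hchar] at hcard
    have heven : Even q := by
      rw [← hF, hcard]
      exact (Nat.even_pow).mpr ⟨even_two, m.ne_zero⟩
    exact (Nat.not_even_iff_odd.mpr hodd) heven
  -- u is idempotent
  have huu : u * u = u := by
    have h0 : (AdjoinRoot.mk (X ^ 2 - X : F[X])) (X ^ 2 - X) = 0 := AdjoinRoot.mk_self
    rw [map_sub, map_pow, AdjoinRoot.mk_X] at h0
    have h1 := sub_eq_zero.mp h0
    calc u * u = u ^ 2 := (sq u).symm
      _ = u := h1
  have hpow : ∀ m : ℕ, u ^ (m + 1) = u := by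
    intro m
    induction m with
    | zero => simp
    | succ k ih => rw [pow_succ, ih, huu]
  -- every element decomposes as a • 1 + b • u
  have hdecomp : ∀ z : R, ∃ a b : F, z = a • (1 : R) + b • u := by
    intro z
    obtain ⟨p, rfl⟩ := AdjoinRoot.mk_surjective z
    induction p using Polynomial.induction_on with
    | C a =>
        exact ⟨a, 0, by
          rw [AdjoinRoot.mk_C, ← AdjoinRoot.algebraMap_eq,
            Algebra.algebraMap_eq_smul_one]
          simp⟩
    | add p1 p2 h1 h2 =>
        obtain ⟨a1, b1, e1⟩ := h1
        obtain ⟨a2, b2, e2⟩ := h2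
        refine ⟨a1 + a2, b1 + b2, ?_⟩
        rw [map_add, e1, e2]
        module
    | monomial m a _ =>
        refine ⟨0, a, ?_⟩
        rw [map_mul, AdjoinRoot.mk_C, map_pow, AdjoinRoot.mk_X, ← hu, hpow m,
          ← AdjoinRoot.algebraMap_eq, Algebra.algebraMap_eq_smul_one]
        simp [smul_mul_assoc]
  -- the value of φ on a • 1 + b • u
  have hφab : ∀ a b : F, φ (a • (1 : R) + b • u) = (-b, 2 * a + b) := by
    intro a b
    rw [map_add, map_smul, map_smul, hφ1, hφu]
    simp only [Prod.smul_mk, Prod.mk_add_mk, smul_eq_mul, Prod.mk.injEq]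
    constructor <;> ring
  -- multiplication formula
  have hmul : ∀ a b c d : F, (a • (1 : R) + b • u) * (c • (1 : R) + d • u)
      = (a * c) • (1 : R) + (a * d + (b * c + b * d)) • u := by
    intro a b c d
    rw [add_mul, mul_add, mul_add, smul_mul_smul_comm, smul_mul_smul_comm,
      smul_mul_smul_comm, smul_mul_smul_comm, huu, one_mul, one_mul, mul_one]
    module
  -- key bilinear identity
  have hkey : ∀ x y : R, (φ x).1 * (φ y).1 + (φ x).2 * (φ y).2
      = 2 * (φ (x * y)).2 := by
    intro x y
    obtain ⟨a, b, rfl⟩ := hdecomp x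
    obtain ⟨c, d, rfl⟩ := hdecomp y
    rw [hmul, hφab, hφab, hφab]
    ring
  -- summed identity
  have hsum : ∀ x y : Fin n → R,
      ∑ i, ((φ (x i)).1 * (φ (y i)).1 + (φ (x i)).2 * (φ (y i)).2)
        = 2 * (φ (∑ i, x i * y i)).2 := by
    intro x y
    calc ∑ i, ((φ (x i)).1 * (φ (y i)).1 + (φ (x i)).2 * (φ (y i)).2)
        = ∑ i, 2 * (φ (x i * y i)).2 := Finset.sum_congr rfl fun i _ => hkey _ _
      _ = 2 * ∑ i, (φ (x i * y i)).2 := (Finset.mul_sum _ _ _).symm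
      _ = 2 * (φ (∑ i, x i * y i)).2 := by rw [map_sum, Prod.snd_sum]
  -- φ is surjective
  have hsurj : ∀ p : F × F, ∃ z : R, φ z = p := by
    intro p
    obtain ⟨p1, p2⟩ := p
    refine ⟨((p2 + p1) / 2) • (1 : R) + (-p1) • u, ?_⟩
    rw [hφab]
    have h2 : 2 * ((p2 + p1) / 2) = p2 + p1 := by field_simp
    rw [h2]
    simp only [Prod.mk.injEq]
    constructor <;> ring
  -- vanishing criterion
  have hzero : ∀ s : R, (φ s).2 = 0 → (φ (u * s)).2 = 0 → s = 0 := by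
    intro s h1 h2
    obtain ⟨e, f, rfl⟩ := hdecomp s
    rw [hφab] at h1
    have hus : u * (e • (1 : R) + f • u) = (0 : F) • (1 : R) + (e + f) • u := by
      rw [mul_add, mul_smul_comm, mul_smul_comm, mul_one, huu]
      module
    rw [hus, hφab] at h2
    have h1' : 2 * e + f = 0 := h1
    have h2' : 2 * 0 + (e + f) = 0 := h2
    have he : e = 0 := by linear_combination h1' - h2'
    have hf : f = 0 := by linear_combination 2 * h2' - h1'
    rw [he, hf]; simp
  ext w
  constructor
  · rintro ⟨x, hx, rfl⟩ v ⟨y, hy, rfl⟩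
    simp only
    rw [hsum]
    have hx' := hsd.subset hx
    have : ∑ i, y i * x i = 0 := hx' y hy
    rw [this, map_zero]
    simp
  · intro hw
    choose v hv using fun i => hsurj (w i)
    have hvC : v ∈ C := by
      have : v ∈ (C : Set (Fin n → R)) := by
        rw [hsd]
        intro x hx
        have h1 := hw (fun i => φ (x i)) ⟨x, hx, rfl⟩
        have h2 := hw (fun i => φ (u * x i)) ⟨u • x, C.smul_mem u hx, by
          funext i; simp [Pi.smul_apply, smul_eq_mul]⟩
        have e1 : (φ (∑ i, x i * v i)).2 = 0 := by
          have := hsum x v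
          simp only [hv] at this
          rw [this] at h1
          exact (mul_eq_zero.mp h1).resolve_left htwo
        have e2 : (φ (u * ∑ i, x i * v i)).2 = 0 := by
          have := hsum (fun i => u * x i) v
          simp only [hv] at this
          rw [this] at h2
          have h3 : ∑ i, u * x i * v i = u * ∑ i, x i * v i := by
            rw [Finset.mul_sum]
            exact Finset.sum_congr rfl fun i _ => (mul_assoc _ _ _)
          rw [h3] at h2
          exact (mul_eq_zero.mp h2).resolve_left htwo
        exact hzero _ e1 e2
      exact this
    exact ⟨v, hvC, by funext i; exact hv i⟩
end

section
/- Let q be an odd prime power and C an LCD linear code of length n over R = F_q[u]/(u^2-u), i.e., C ∩ C^perp = {0}. Then phi(C), with phi(a+ub) = (-b, 2a+b) coordinatewise, is an LCD code of length 2n over F_q. -/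
open Polynomial

section StmtNineAux

variable {F : Type} [Field F]

lemma stmt9_monic_f : (X ^ 2 - X : F[X]).Monic := by
  have := Polynomial.monic_X_pow_sub (p := (X:F[X])) (n := 2) (by rw [degree_X]; norm_num)
  simpa using this

lemma stmt9_repr (z : AdjoinRoot (X ^ 2 - X : F[X])) :
    ∃ a b : F, z = algebraMap F _ a + algebraMap F _ b * AdjoinRoot.root _ := by
  obtain ⟨p, rfl⟩ := AdjoinRoot.mk_surjective z
  set f : F[X] := X ^ 2 - X with hf
  have hmk : AdjoinRoot.mk f p = AdjoinRoot.mk f (p %ₘ f) := by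
    conv_lhs => rw [← Polynomial.modByMonic_add_div p f]
    simp [map_add, map_mul, AdjoinRoot.mk_self]
  have hdeg : (p %ₘ f).degree < 2 := by
    have := Polynomial.degree_modByMonic_lt p (stmt9_monic_f (F := F))
    have hdf : (f).degree = 2 := by rw [hf]; compute_degree!
    rwa [hdf] at this
  have hdeg1 : (p %ₘ f).degree ≤ 1 := Order.le_of_lt_succ (by exact_mod_cast hdeg)
  have hrepr := Polynomial.eq_X_add_C_of_degree_le_one hdeg1
  refine ⟨(p %ₘ f).coeff 0, (p %ₘ f).coeff 1, ?_⟩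
  rw [hmk, hrepr]
  simp [map_add, map_mul, AdjoinRoot.mk_X, AdjoinRoot.mk_C]
  ring

lemma stmt9_root_sq : (AdjoinRoot.root (X ^ 2 - X : F[X])) ^ 2 = AdjoinRoot.root _ := by
  have h : (AdjoinRoot.mk (X ^ 2 - X : F[X])) (X ^ 2 - X) = 0 := AdjoinRoot.mk_self
  have := sub_eq_zero.mp (by simpa [map_sub, map_pow, AdjoinRoot.mk_X] using h)
  simpa using this

variable (φ : AdjoinRoot (X ^ 2 - X : F[X]) →ₗ[F] F × F)
    (hφ1 : φ 1 = (0, 2)) (hφu : φ (AdjoinRoot.root (X ^ 2 - X : F[X])) = (-1, 1))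

include hφ1 hφu in
lemma stmt9_phi_val (a b : F) :
    φ (algebraMap F _ a + algebraMap F _ b * AdjoinRoot.root _) = (-b, 2 * a + b) := by
  have h1 : algebraMap F (AdjoinRoot (X ^ 2 - X : F[X])) a = a • 1 :=
    Algebra.algebraMap_eq_smul_one a
  have h2 : algebraMap F (AdjoinRoot (X ^ 2 - X : F[X])) b * AdjoinRoot.root _
      = b • AdjoinRoot.root _ := (Algebra.smul_def b _).symm
  rw [h1, h2, map_add, map_smul, map_smul, hφ1, hφu]
  simp [Prod.ext_iff, smul_eq_mul]
  ring

include hφ1 hφu in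
lemma stmt9_key (x y : AdjoinRoot (X ^ 2 - X : F[X])) :
    (φ x).1 * (φ y).1 + (φ x).2 * (φ y).2 = 2 * (φ (x * y)).2 := by
  obtain ⟨a, b, rfl⟩ := stmt9_repr x
  obtain ⟨c, d, rfl⟩ := stmt9_repr y
  have hmul : (algebraMap F (AdjoinRoot (X ^ 2 - X : F[X])) a + algebraMap F _ b * AdjoinRoot.root _)
      * (algebraMap F _ c + algebraMap F _ d * AdjoinRoot.root _)
      = algebraMap F _ (a * c) + algebraMap F _ (a * d + b * c + b * d) * AdjoinRoot.root _ := by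
    simp only [map_add, map_mul]
    linear_combination (algebraMap F (AdjoinRoot (X ^ 2 - X : F[X])) b *
      algebraMap F (AdjoinRoot (X ^ 2 - X : F[X])) d) * (stmt9_root_sq (F := F))
  rw [hmul, stmt9_phi_val φ hφ1 hφu, stmt9_phi_val φ hφ1 hφu, stmt9_phi_val φ hφ1 hφu]
  ring

include hφ1 hφu in
lemma stmt9_inj (h2 : (2 : F) ≠ 0) (z : AdjoinRoot (X ^ 2 - X : F[X]))
    (hz : (φ z).2 = 0) (huz : (φ (AdjoinRoot.root (X ^ 2 - X : F[X]) * z)).2 = 0) : z = 0 := by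
  obtain ⟨a, b, rfl⟩ := stmt9_repr z
  have e1 : 2 * a + b = 0 := by rw [stmt9_phi_val φ hφ1 hφu] at hz; exact hz
  have e2 : a + b = 0 := by
    have hmul : AdjoinRoot.root (X ^ 2 - X : F[X]) *
        (algebraMap F _ a + algebraMap F _ b * AdjoinRoot.root _)
        = algebraMap F _ (0:F) + algebraMap F _ (a + b) * AdjoinRoot.root _ := by
      simp only [map_add, map_zero]
      linear_combination (algebraMap F (AdjoinRoot (X ^ 2 - X : F[X])) b) * (stmt9_root_sq (F := F))
    rw [hmul, stmt9_phi_val φ hφ1 hφu] at huz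
    simpa using huz
  have ha : a = 0 := by linear_combination e1 - e2
  have hb : b = 0 := by linear_combination e2 - ha
  simp [ha, hb]

lemma stmt9_two_ne_zero (q : ℕ) (hodd : Odd q) [Fintype F]
    (hF : Fintype.card F = q) : (2 : F) ≠ 0 := by
  intro h20
  set p := ringChar F with hp
  haveI : CharP F p := ringChar.charP F
  have hprime : p.Prime := CharP.char_is_prime F p
  haveI : Fact p.Prime := ⟨hprime⟩
  obtain ⟨m, hm⟩ := FiniteField.card F p
  have hdvd : p ∣ 2 := by
    have : ((2:ℕ) : F) = 0 := by exact_mod_cast h20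
    exact (CharP.cast_eq_zero_iff F p 2).mp this
  have hp2 : p = 2 := (Nat.prime_dvd_prime_iff_eq hprime Nat.prime_two).mp hdvd
  have : (2 : ℕ) ∣ q := by
    rw [← hF, hm.2]
    exact hp2 ▸ dvd_pow_self p m.2.ne'
  exact (Nat.not_even_iff_odd.mpr hodd) (even_iff_two_dvd.mpr this)

end StmtNineAux

set_option maxHeartbeats 1000000 in
/-- If `C` is an LCD linear code of length `n` over
`R = F_q[u]/(u^2-u)` (`q` odd), i.e. `C ∩ C^⊥ = {0}`, then its Gray image under
`φ(a + u b) = (-b, 2a + b)` (coordinatewise) is an LCD code of length `2n` over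
`F_q`. -/
theorem stmt_9 (q : ℕ) (hq : IsPrimePow q) (hodd : Odd q)
    (F : Type) [Field F] [Fintype F] (hF : Fintype.card F = q) (n : ℕ)
    (φ : AdjoinRoot (X ^ 2 - X : F[X]) →ₗ[F] F × F)
    (hφ1 : φ 1 = (0, 2)) (hφu : φ (AdjoinRoot.root (X ^ 2 - X : F[X])) = (-1, 1))
    (C : Submodule (AdjoinRoot (X ^ 2 - X : F[X]))
          (Fin n → AdjoinRoot (X ^ 2 - X : F[X])))
    (hlcd : (C : Set (Fin n → AdjoinRoot (X ^ 2 - X : F[X])))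
        ∩ {y : Fin n → AdjoinRoot (X ^ 2 - X : F[X]) | ∀ x ∈ C, ∑ i, x i * y i = 0}
        = {0}) :
    ((fun v (i : Fin n) => φ (v i)) '' (C : Set (Fin n → AdjoinRoot (X ^ 2 - X : F[X]))))
      ∩ {w : Fin n → F × F |
          ∀ v ∈ (fun v (i : Fin n) => φ (v i)) ''
              (C : Set (Fin n → AdjoinRoot (X ^ 2 - X : F[X]))),
            ∑ i, ((v i).1 * (w i).1 + (v i).2 * (w i).2) = 0}
      = {0} := by
  have h2 : (2 : F) ≠ 0 := stmt9_two_ne_zero q hodd hF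
  apply Set.eq_of_subset_of_subset
  · rintro w ⟨⟨y, hyC, rfl⟩, hw⟩
    have e : ∀ x' : Fin n → AdjoinRoot (X ^ 2 - X : F[X]), x' ∈ C →
        (φ (∑ i, x' i * y i)).2 = 0 := by
      intro x' hx'
      have h := hw (fun i => φ (x' i)) ⟨x', hx', rfl⟩
      have hsum : ∑ i, ((φ (x' i)).1 * (φ (y i)).1 + (φ (x' i)).2 * (φ (y i)).2)
          = 2 * (φ (∑ i, x' i * y i)).2 := by
        rw [map_sum, Prod.snd_sum, Finset.mul_sum]
        exact Finset.sum_congr rfl fun i _ => stmt9_key φ hφ1 hφu _ _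
      have h0 : 2 * (φ (∑ i, x' i * y i)).2 = 0 := by rw [← hsum]; exact h
      rcases mul_eq_zero.mp h0 with h' | h'
      · exact absurd h' h2
      · exact h'
    have hmem : y ∈ (C : Set (Fin n → AdjoinRoot (X ^ 2 - X : F[X])))
        ∩ {y | ∀ x ∈ C, ∑ i, x i * y i = 0} := by
      refine ⟨hyC, ?_⟩
      intro x hx
      apply stmt9_inj φ hφ1 hφu h2
      · exact e x hx
      · have hsmul := e (AdjoinRoot.root (X ^ 2 - X : F[X]) • x) (C.smul_mem _ hx)
        have hrw : ∑ i, (AdjoinRoot.root (X ^ 2 - X : F[X]) • x) i * y i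
            = AdjoinRoot.root (X ^ 2 - X : F[X]) * ∑ i, x i * y i := by
          rw [Finset.mul_sum]
          exact Finset.sum_congr rfl fun i _ => by
            simp [Pi.smul_apply, smul_eq_mul, mul_assoc]
        rwa [hrw] at hsmul
    rw [hlcd] at hmem
    rw [Set.mem_singleton_iff] at hmem
    subst hmem
    simp only [Set.mem_singleton_iff]
    funext i
    simp
  · intro w hw
    rw [Set.mem_singleton_iff] at hw
    subst hw
    refine ⟨⟨0, C.zero_mem, ?_⟩, ?_⟩
    · funext i; simp
    · intro v hv
      simp
end

section
/- Let q be any prime power and define beta: R -> F_q^2 by beta(a+ub) = (a, a+b), extended coordinatewise. For any linear code C of length n over R = F_q[u]/(u^2-u), beta(C^perp) = beta(C)^perp. Consequently, beta sends self-dual codes to self-dual codes and LCD codes to LCD codes. -/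
open Polynomial

/-- The ring `R = F_q[u]/(u^2 - u)`. -/
abbrev Rring (F : Type) [Field F] := AdjoinRoot (X ^ 2 - X : F[X])

/-- Euclidean dual (as a set) of a code over `R`. -/
def dualR {F : Type} [Field F] {n : ℕ}
    (C : Submodule (Rring F) (Fin n → Rring F)) : Set (Fin n → Rring F) :=
  {y | ∀ x ∈ C, ∑ i, x i * y i = 0}

/-- Euclidean dual (as a set) of a subset of `(F × F)^n ≅ F^{2n}`. -/
def dualF {F : Type} [Field F] {n : ℕ} (S : Set (Fin n → F × F)) :
    Set (Fin n → F × F) :=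
  {w | ∀ v ∈ S, ∑ i, ((v i).1 * (w i).1 + (v i).2 * (w i).2) = 0}

/-- Coordinatewise extension of a map `R → F × F` applied to a set of words. -/
def grayImage {F : Type} [Field F] {n : ℕ} (β : Rring F →ₗ[F] F × F)
    (S : Set (Fin n → Rring F)) : Set (Fin n → F × F) :=
  (fun v (i : Fin n) => β (v i)) '' S


namespace Stmt10Aux

variable {F : Type} [Field F]

lemma f_ne : (X ^ 2 - X : F[X]) ≠ 0 := by
  intro h
  have := congrArg (fun p => Polynomial.coeff p 2) h
  simp [Polynomial.coeff_X] at this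

lemma f_natDegree : (X ^ 2 - X : F[X]).natDegree = 2 := by
  compute_degree!

lemma aeval_prod : aeval ((0 : F), (1 : F)) (X ^ 2 - X : F[X]) = 0 := by
  simp [Prod.ext_iff]

/-- The CRT algebra isomorphism component `R →ₐ F × F`. -/
noncomputable def phi : AdjoinRoot (X ^ 2 - X : F[X]) →ₐ[F] F × F :=
  AdjoinRoot.liftAlgHom _ (Algebra.ofId F (F × F)) ((0 : F), (1 : F)) aeval_prod

lemma phi_root : phi (AdjoinRoot.root (X ^ 2 - X : F[X])) = ((0 : F), (1 : F)) :=
  by unfold phi; exact AdjoinRoot.liftAlgHom_root (X ^ 2 - X : F[X]) (Algebra.ofId F (F × F)) ((0 : F), (1 : F)) aeval_prod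

/-- Extensionality for F-linear maps out of `R`, on the basis `1, root`. -/
lemma linearMap_ext {M : Type} [AddCommMonoid M] [Module F M]
    {f g : AdjoinRoot (X ^ 2 - X : F[X]) →ₗ[F] M}
    (h1 : f 1 = g 1) (hu : f (AdjoinRoot.root (X ^ 2 - X : F[X])) = g (AdjoinRoot.root _)) :
    f = g := by
  set pb := AdjoinRoot.powerBasis (f_ne (F := F)) with hpb
  apply pb.basis.ext
  intro i
  have hdim : pb.dim = 2 := f_natDegree
  have hi : (i : ℕ) = 0 ∨ (i : ℕ) = 1 := by have := i.isLt; omega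
  have hb : pb.basis i = pb.gen ^ (i : ℕ) := by rw [PowerBasis.coe_basis]
  have hgen : pb.gen = AdjoinRoot.root (X ^ 2 - X : F[X]) := AdjoinRoot.powerBasis_gen _
  rcases hi with hi | hi <;> rw [hb, hgen, hi]
  · simpa using h1
  · simpa using hu


/-- Explicit inverse of β. -/
noncomputable def psi : F × F →ₗ[F] AdjoinRoot (X ^ 2 - X : F[X]) where
  toFun p := p.1 • (1 - AdjoinRoot.root (X ^ 2 - X : F[X])) + p.2 • AdjoinRoot.root _
  map_add' p q := by simp [add_smul]; abel
  map_smul' c p := by simp [smul_smul]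

lemma psi_apply (p : F × F) :
    psi p = p.1 • ((1 : AdjoinRoot (X ^ 2 - X : F[X])) - AdjoinRoot.root _)
      + p.2 • AdjoinRoot.root (X ^ 2 - X : F[X]) := rfl

variable (β : AdjoinRoot (X ^ 2 - X : F[X]) →ₗ[F] F × F)
    (hβ1 : β 1 = (1, 1)) (hβu : β (AdjoinRoot.root (X ^ 2 - X : F[X])) = (0, 1))

include hβ1 hβu

lemma beta_eq_phi : ∀ x, β x = phi x := by
  have h : β = (phi (F := F)).toLinearMap := by
    apply linearMap_ext
    · rw [hβ1]; simp [Prod.ext_iff]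
    · rw [hβu, AlgHom.toLinearMap_apply, phi_root]
  intro x; rw [h]; rfl

lemma beta_mul (x y : AdjoinRoot (X ^ 2 - X : F[X])) : β (x * y) = β x * β y := by
  rw [beta_eq_phi β hβ1 hβu, beta_eq_phi β hβ1 hβu, beta_eq_phi β hβ1 hβu, map_mul]

lemma psi_beta : ∀ x, psi (β x) = x := by
  have h : (psi (F := F)).comp β = LinearMap.id := by
    apply linearMap_ext
    · rw [LinearMap.comp_apply, hβ1, psi_apply]; simp
    · rw [LinearMap.comp_apply, hβu, psi_apply]; simp
  intro x
  simpa using LinearMap.congr_fun h x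

lemma beta_psi : ∀ p, β (psi p) = p := by
  intro p
  rw [psi_apply, map_add, map_smul, map_smul, map_sub, hβ1, hβu]
  ext <;> simp

lemma beta_inj : Function.Injective β := by
  intro x y h
  have := psi_beta β hβ1 hβu
  rw [← this x, ← this y, h]

end Stmt10Aux

open Stmt10Aux in
set_option maxHeartbeats 1000000 in
/-- For any prime power `q`, the map `β(a + u b) = (a, a + b)`
(the `F`-linear map with `β 1 = (1,1)` and `β u = (0,1)`), applied coordinatewise,
satisfies `β(C^⊥) = β(C)^⊥` for every linear code `C` of length `n` over
`R = F_q[u]/(u^2-u)`; consequently it sends self-dual codes to self-dual codes and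
LCD codes to LCD codes. -/
theorem stmt_10 (q : ℕ) (hq : IsPrimePow q)
    (F : Type) [Field F] [Fintype F] (hF : Fintype.card F = q) (n : ℕ)
    (β : Rring F →ₗ[F] F × F)
    (hβ1 : β 1 = (1, 1)) (hβu : β (AdjoinRoot.root (X ^ 2 - X : F[X])) = (0, 1))
    (C : Submodule (Rring F) (Fin n → Rring F)) :
    grayImage β (dualR C) = dualF (grayImage β (C : Set (Fin n → Rring F)))
    ∧ ((C : Set (Fin n → Rring F)) = dualR C →
        grayImage β (C : Set (Fin n → Rring F))
          = dualF (grayImage β (C : Set (Fin n → Rring F))))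
    ∧ ((C : Set (Fin n → Rring F)) ∩ dualR C = {0} →
        grayImage β (C : Set (Fin n → Rring F))
          ∩ dualF (grayImage β (C : Set (Fin n → Rring F))) = {0}) := by
  classical
  have hmul := beta_mul β hβ1 hβu
  have hinj := beta_inj β hβ1 hβu
  have hbp := beta_psi β hβ1 hβu
  have key : grayImage β (dualR C) = dualF (grayImage β (C : Set (Fin n → Rring F))) := by
    ext w
    constructor
    · rintro ⟨y, hy, rfl⟩ v ⟨z, hz, rfl⟩
      have h0 : ∑ i, z i * y i = 0 := hy z hz
      have hb : ∑ i, β (z i) * β (y i) = 0 := by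
        have := congrArg β h0
        rw [map_sum, map_zero] at this
        simpa [hmul] using this
      have h1 : ∑ i, (β (z i)).1 * (β (y i)).1 = 0 := by
        have := congrArg Prod.fst hb
        simpa [Prod.fst_sum] using this
      have h2 : ∑ i, (β (z i)).2 * (β (y i)).2 = 0 := by
        have := congrArg Prod.snd hb
        simpa [Prod.snd_sum] using this
      simp only []
      rw [Finset.sum_add_distrib, h1, h2, add_zero]
    · intro hw
      refine ⟨fun i => psi (w i), ?_, funext fun i => hbp (w i)⟩
      intro z hz
      have hzw := hw (fun i => β (z i)) ⟨z, hz, rfl⟩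
      have hzw2 := hw (fun i => β ((AdjoinRoot.root (X ^ 2 - X : F[X]) • z) i))
        ⟨_, C.smul_mem _ hz, rfl⟩
      simp only [Pi.smul_apply, smul_eq_mul, hmul, hβu] at hzw2
      have hA : ∑ i, (β (z i)).2 * (w i).2 = 0 := by
        simpa [Prod.fst_mul, Prod.snd_mul] using hzw2
      have hB : ∑ i, (β (z i)).1 * (w i).1 = 0 := by
        rw [Finset.sum_add_distrib, hA, add_zero] at hzw
        exact hzw
      apply hinj
      rw [map_zero, map_sum]
      have : ∑ i, β (z i) * w i = 0 := by
        rw [Prod.ext_iff]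
        constructor
        · simpa [Prod.fst_sum] using hB
        · simpa [Prod.snd_sum] using hA
      simpa [hmul, hbp] using this
  have ginj : Function.Injective (fun (v : Fin n → Rring F) (i : Fin n) => β (v i)) :=
    fun a b hab => funext fun i => hinj (congrFun hab i)
  refine ⟨key, ?_, ?_⟩
  · intro h
    conv_lhs => rw [h]
    exact key
  · intro h
    rw [← key, grayImage, grayImage, ← Set.image_inter ginj, h]
    simp only [Set.image_singleton]
    congr 1
    funext i
    simp
end

section
/- Let q be a prime power, e a positive integer, and let the conjugation on F_{q^{2e}} be x -> x^{q^e}. The number of elements c in S = F_{q^{2e}}[u]/(u^2-u) (with conjugation extended by fixing u) satisfying 1 + c·c̄ = 0 is exactly (q^e + 1)^2. -/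
open Polynomial

lemma count_aux (E : Type) [Field E] [Fintype E] (Q : ℕ) (hQ : 1 < Q)
    (hcard : Fintype.card E = Q ^ 2) :
    Nat.card {a : E // a ^ (Q + 1) = -1} = Q + 1 := by
  classical
  have hQ2 : 1 < Q ^ 2 := by nlinarith
  set f : E[X] := X ^ (Q + 1) + 1 with hfdef
  set g : E[X] := X ^ (Q ^ 2) - X with hgdef
  -- (-1)^(Q-1) = 1 in E[X]
  have hneg : ((-1 : E[X])) ^ (Q - 1) = 1 := by
    rcases Nat.even_or_odd Q with hev | hod
    · have h2 : ringChar E = 2 := by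
        rw [FiniteField.even_card_iff_char_two, hcard]
        exact Nat.even_iff.mp ((Nat.even_pow).mpr ⟨hev, two_ne_zero⟩)
      haveI : CharP E 2 := h2 ▸ ringChar.charP E
      haveI : CharP E[X] 2 := Polynomial.instCharP 2
      rw [CharTwo.neg_eq, one_pow]
    · rw [(Nat.Odd.sub_odd hod odd_one).neg_one_pow]
  have hsq : Q ^ 2 - 1 = (Q + 1) * (Q - 1) := by
    have := Nat.sq_sub_sq Q 1
    simpa using this
  have hdvd1 : f ∣ (X ^ (Q ^ 2 - 1) - 1 : E[X]) := by
    have h := sub_dvd_pow_sub_pow (X ^ (Q + 1) : E[X]) (-1) (Q - 1)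
    rw [sub_neg_eq_add, ← pow_mul, hneg, ← hsq] at h
    exact h
  have hdvd : f ∣ g := by
    refine dvd_trans hdvd1 ⟨X, ?_⟩
    rw [sub_mul, one_mul, ← pow_succ, Nat.sub_add_cancel (le_of_lt hQ2)]
  have hg0 : g ≠ 0 := FiniteField.X_pow_card_sub_X_ne_zero E hQ2
  have hgdeg : g.natDegree = Q ^ 2 := FiniteField.X_pow_card_sub_X_natDegree_eq E hQ2
  have hgroots : g.roots = Finset.univ.val := by
    have := FiniteField.roots_X_pow_card_sub_X E
    rwa [hcard] at this
  have hgsplits : Splits g := by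
    rw [splits_iff_card_roots, hgroots, hgdeg, ← hcard]
    rfl
  have hgsep : g.Separable := by
    have hd : derivative g = -1 := by
      have hc : ((Q ^ 2 : ℕ) : E) = 0 := by
        rw [← hcard]; exact FiniteField.cast_card_eq_zero E
      simp [hgdef, derivative_sub, derivative_X_pow, hc]
    rw [Polynomial.Separable, hd]
    exact ⟨0, -1, by ring⟩
  have hfsep : f.Separable := hgsep.of_dvd hdvd
  have hfsplits : Splits f := Splits.of_dvd hgsplits hg0 hdvd
  have hfdeg : f.natDegree = Q + 1 := by
    rw [hfdef, ← C_1, natDegree_X_pow_add_C]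
  have hf0 : f ≠ 0 := fun h => by simp [h] at hfdeg
  have hfroots : f.roots.card = Q + 1 := by
    rw [splits_iff_card_roots] at hfsplits
    rw [hfsplits, hfdeg]
  have hnodup : f.roots.Nodup := nodup_roots hfsep
  have key : ∀ a : E, a ^ (Q + 1) = -1 ↔ a ∈ f.roots.toFinset := by
    intro a
    rw [Multiset.mem_toFinset, mem_roots hf0]
    simp only [IsRoot, hfdef, eval_add, eval_pow, eval_X, eval_one]
    rw [add_eq_zero_iff_eq_neg]
  calc Nat.card {a : E // a ^ (Q + 1) = -1}
      = Nat.card {a : E // a ∈ f.roots.toFinset} :=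
        Nat.card_congr (Equiv.subtypeEquivRight key)
    _ = f.roots.toFinset.card := Nat.card_eq_finsetCard _
    _ = f.roots.card := Multiset.toFinset_card_of_nodup hnodup
    _ = Q + 1 := hfroots

set_option maxHeartbeats 1000000 in
/-- In `S = F_{q^{2e}}[u]/(u^2-u)` with conjugation `σ` induced by
`x ↦ x^(q^e)` on `F_{q^{2e}}` and fixing `u`, the number of `c` with
`1 + c·σ(c) = 0` is exactly `(q^e + 1)^2`. -/
theorem stmt_12 (q e : ℕ) (hq : IsPrimePow q) (he : 0 < e)
    (E : Type) [Field E] [Fintype E] (hE : Fintype.card E = q ^ (2 * e))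
    (σ : AdjoinRoot (X ^ 2 - X : E[X]) →+* AdjoinRoot (X ^ 2 - X : E[X]))
    (hσof : ∀ x : E, σ (AdjoinRoot.of (X ^ 2 - X : E[X]) x)
        = AdjoinRoot.of (X ^ 2 - X : E[X]) (x ^ q ^ e))
    (hσu : σ (AdjoinRoot.root (X ^ 2 - X : E[X])) = AdjoinRoot.root (X ^ 2 - X : E[X])) :
    Nat.card {c : AdjoinRoot (X ^ 2 - X : E[X]) // 1 + c * σ c = 0} = (q ^ e + 1) ^ 2 := by
  classical
  obtain ⟨p, k, hp, hk, rfl⟩ := hq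
  have hpp : p.Prime := Nat.prime_iff.mpr hp
  haveI := Fact.mk hpp
  set Q : ℕ := (p ^ k) ^ e with hQdef
  have hQ1 : 1 < Q := Nat.one_lt_pow he.ne' (Nat.one_lt_pow hk.ne' hpp.one_lt)
  have hQ0 : Q ≠ 0 := by omega
  have hcardQ : Fintype.card E = Q ^ 2 := by
    rw [hE, hQdef, ← pow_mul, ← pow_mul]
    ring_nf
  -- characteristic of E is p
  have hcharp : CharP E p := by
    haveI := ringChar.charP E
    obtain ⟨n, hrp, hcn⟩ := FiniteField.card E (ringChar E)
    have hdvd : ringChar E ∣ p ^ (k * (2 * e)) := by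
      rw [pow_mul, ← hE, hcn]
      exact dvd_pow_self _ n.ne_zero
    have hre : ringChar E = p :=
      (Nat.prime_dvd_prime_iff_eq hrp hpp).mp (hrp.dvd_of_dvd_pow hdvd)
    exact hre ▸ ringChar.charP E
  haveI := hcharp
  set F : E →+* E := iterateFrobenius E p (k * e) with hFdef
  have hF : ∀ x : E, F x = x ^ Q := by
    intro x
    rw [hFdef, iterateFrobenius_def, hQdef, ← pow_mul]
  -- the isomorphism φ : AdjoinRoot (X^2-X) →+* E × E
  set i : E →+* E × E := (RingHom.id E).prod (RingHom.id E) with hidef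
  have hx0 : eval₂ i ((0 : E), (1 : E)) (X ^ 2 - X : E[X]) = 0 := by
    simp [Prod.ext_iff]
  set φ : AdjoinRoot (X ^ 2 - X : E[X]) →+* E × E :=
    AdjoinRoot.lift i ((0 : E), (1 : E)) hx0 with hφdef
  have hφof : ∀ x : E, φ (AdjoinRoot.of (X ^ 2 - X : E[X]) x) = (x, x) :=
    fun x => AdjoinRoot.lift_of hx0
  have hφroot : φ (AdjoinRoot.root (X ^ 2 - X : E[X])) = ((0 : E), (1 : E)) :=
    AdjoinRoot.lift_root hx0
  set τ : E × E →+* E × E := F.prodMap F with hτdef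
  have hτ : ∀ v : E × E, τ v = (v.1 ^ Q, v.2 ^ Q) := by
    intro v; rw [hτdef]; exact Prod.ext (hF v.1) (hF v.2)
  have hcomm : ∀ c, φ (σ c) = τ (φ c) := by
    have hext : (φ.comp σ).comp (AdjoinRoot.mk (X ^ 2 - X : E[X]))
        = (τ.comp φ).comp (AdjoinRoot.mk (X ^ 2 - X : E[X])) := by
      apply Polynomial.ringHom_ext
      · intro a
        have h1 : (AdjoinRoot.mk (X ^ 2 - X : E[X])) (C a)
            = AdjoinRoot.of (X ^ 2 - X : E[X]) a := rfl
        simp only [RingHom.comp_apply, h1, hσof, hφof, hτ]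
      · have h2 : (AdjoinRoot.mk (X ^ 2 - X : E[X])) X
            = AdjoinRoot.root (X ^ 2 - X : E[X]) := AdjoinRoot.mk_X
        simp only [RingHom.comp_apply, h2, hσu, hφroot, hτ]
        simp [zero_pow hQ0]
    intro c
    obtain ⟨P, rfl⟩ := AdjoinRoot.mk_surjective c
    exact RingHom.congr_fun hext P
  -- bijectivity of φ
  have hfdeg : (X ^ 2 - X : E[X]).natDegree = 2 := by
    compute_degree!
  have hf0 : (X ^ 2 - X : E[X]) ≠ 0 := fun h => by simp [h] at hfdeg
  set pb := AdjoinRoot.powerBasis hf0 with hpbdef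
  haveI : Fintype (AdjoinRoot (X ^ 2 - X : E[X])) := Module.fintypeOfFintype pb.basis
  have hcardS : Fintype.card (AdjoinRoot (X ^ 2 - X : E[X])) = Fintype.card (E × E) := by
    rw [Module.card_fintype pb.basis, Fintype.card_prod, Fintype.card_fin]
    have hd : pb.dim = 2 := hfdeg
    rw [hd, sq]
  have hsurj : Function.Surjective φ := by
    rintro ⟨a, b⟩
    refine ⟨AdjoinRoot.of (X ^ 2 - X : E[X]) a
      + AdjoinRoot.of (X ^ 2 - X : E[X]) (b - a) * AdjoinRoot.root (X ^ 2 - X : E[X]), ?_⟩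
    rw [map_add, map_mul, hφof, hφof, hφroot]
    simp [Prod.ext_iff]
  have hbij : Function.Bijective φ :=
    (Fintype.bijective_iff_surjective_and_card φ).mpr ⟨hsurj, hcardS⟩
  -- transfer the count
  have step1 : Nat.card {c : AdjoinRoot (X ^ 2 - X : E[X]) // 1 + c * σ c = 0}
      = Nat.card {v : E × E // 1 + v * τ v = 0} := by
    apply Nat.card_congr
    refine Equiv.subtypeEquiv (Equiv.ofBijective φ hbij) fun c => ?_
    simp only [Equiv.ofBijective_apply]
    constructor
    · intro h
      have := congrArg φ h
      rwa [map_add, map_mul, map_one, map_zero, hcomm] at this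
    · intro h
      apply hbij.1
      rwa [map_add, map_mul, map_one, map_zero, hcomm]
  have step2 : ∀ v : E × E, (1 + v * τ v = 0) ↔ (v.1 ^ (Q + 1) = -1 ∧ v.2 ^ (Q + 1) = -1) := by
    intro v
    rw [hτ]
    have h1 : v * (v.1 ^ Q, v.2 ^ Q) = (v.1 ^ (Q + 1), v.2 ^ (Q + 1)) := by
      rw [Prod.ext_iff]
      constructor <;> simp [pow_succ, mul_comm]
    rw [h1, Prod.ext_iff]
    simp only [Prod.fst_add, Prod.snd_add, Prod.fst_one, Prod.snd_one, Prod.fst_zero,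
      Prod.snd_zero]
    rw [add_comm (1 : E) _, add_comm (1 : E) _, add_eq_zero_iff_eq_neg, add_eq_zero_iff_eq_neg]
  have step3 : Nat.card {v : E × E // 1 + v * τ v = 0}
      = Nat.card ({a : E // a ^ (Q + 1) = -1} × {b : E // b ^ (Q + 1) = -1}) := by
    apply Nat.card_congr
    exact (Equiv.subtypeEquivRight step2).trans
      (Equiv.subtypeProdEquivProd (p := fun a : E => a ^ (Q + 1) = -1)
        (q := fun b : E => b ^ (Q + 1) = -1))
  rw [step1, step3, Nat.card_prod, count_aux E Q hQ1 hcardQ, sq]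
end

section
/- Let d be a positive integer, q a prime power, and S = F_{q^d}[u]/(u^2-u). The number of pairs (a, b) in S × S such that 1 + ab is a unit of S equals q^{4d} - 2q^{3d} + 3q^{2d} - 2q^d + 1. -/
open Polynomial


lemma mySpanCoprime (K : Type) [Field K] :
    IsCoprime (Ideal.span {(X : K[X])}) (Ideal.span {(X - C 1 : K[X])}) :=
  (Ideal.isCoprime_span_singleton_iff _ _).mpr ⟨1, -1, by ring_nf; simp⟩

noncomputable def myEquiv (K : Type) [Field K] :
    AdjoinRoot (X ^ 2 - X : K[X]) ≃+* K × K := by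
  have h1 : (Ideal.span {(X ^ 2 - X : K[X])}) =
      Ideal.span {(X : K[X])} ⊓ Ideal.span {(X - C 1 : K[X])} := by
    rw [Ideal.inf_eq_mul_of_isCoprime (mySpanCoprime K),
      Ideal.span_singleton_mul_span_singleton]
    congr 1
    rw [Set.singleton_eq_singleton_iff]
    simp only [map_one]
    ring
  have h2 : (Ideal.span {(X : K[X])}) = Ideal.span {(X - C 0 : K[X])} := by simp
  exact (Ideal.quotEquivOfEq h1).trans <|
    (Ideal.quotientInfEquivQuotientProd _ _ (mySpanCoprime K)).trans <|
    RingEquiv.prodCongr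
      ((Ideal.quotEquivOfEq h2).trans (Polynomial.quotientSpanXSubCAlgEquiv (0:K)).toRingEquiv)
      (Polynomial.quotientSpanXSubCAlgEquiv (1:K)).toRingEquiv

open scoped Classical in
lemma myCount (K : Type) [Field K] [Fintype K] :
    Fintype.card {p : K × K // 1 + p.1 * p.2 ≠ 0}
      = Fintype.card K * Fintype.card K - (Fintype.card K - 1) := by
  have e : {p : K × K // 1 + p.1 * p.2 = 0} ≃ {a : K // a ≠ 0} :=
    { toFun := fun p => ⟨p.1.1, by
        intro h
        have h2 := p.2
        rw [h, zero_mul, add_zero] at h2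
        exact one_ne_zero h2⟩
      invFun := fun a => ⟨(a.1, -(a.1)⁻¹), by simp [mul_inv_cancel₀ a.2]⟩
      left_inv := fun p => by
        have h2 := p.2
        have h1 : (p.1.1 : K) ≠ 0 := by
          intro h
          rw [h, zero_mul, add_zero] at h2
          exact one_ne_zero h2
        have : p.1.2 = -(p.1.1)⁻¹ := by
          field_simp
          linear_combination h2
        ext <;> simp [this.symm]
      right_inv := fun a => rfl }
  have hcompl := Fintype.card_subtype_compl (fun p : K × K => 1 + p.1 * p.2 = 0)
  have : Fintype.card {p : K × K // 1 + p.1 * p.2 = 0} = Fintype.card K - 1 := by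
    rw [Fintype.card_congr e, Fintype.card_subtype_compl, Fintype.card_subtype_eq]
  simp only [Fintype.card_prod] at hcompl
  convert hcompl using 2
  exact this.symm

lemma my_prod_isUnit_iff {M N : Type*} [Monoid M] [Monoid N] {x : M × N} :
    IsUnit x ↔ IsUnit x.1 ∧ IsUnit x.2 := by
  constructor
  · intro h
    exact ⟨h.map (MonoidHom.fst M N), h.map (MonoidHom.snd M N)⟩
  · rintro ⟨⟨u, hu⟩, ⟨v, hv⟩⟩
    exact ⟨⟨(↑u, ↑v), (↑u⁻¹, ↑v⁻¹), by ext <;> simp, by ext <;> simp⟩,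
      Prod.ext hu hv⟩

set_option maxHeartbeats 1000000 in
/-- In `S = F_{q^d}[u]/(u^2-u)`, the number of pairs `(a,b)` such
that `1 + a*b` is a unit of `S` equals `q^{4d} - 2q^{3d} + 3q^{2d} - 2q^d + 1`. -/
theorem stmt_15 (q d : ℕ) (hq : IsPrimePow q) (hd : 0 < d)
    (K : Type) [Field K] [Fintype K] (hK : Fintype.card K = q ^ d) :
    (Nat.card {p : AdjoinRoot (X ^ 2 - X : K[X]) × AdjoinRoot (X ^ 2 - X : K[X]) //
        IsUnit (1 + p.1 * p.2)} : ℤ)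
      = (q : ℤ) ^ (4 * d) - 2 * (q : ℤ) ^ (3 * d) + 3 * (q : ℤ) ^ (2 * d)
        - 2 * (q : ℤ) ^ d + 1 := by
  classical
  let e := myEquiv K
  have hiso : ∀ x : AdjoinRoot (X ^ 2 - X : K[X]), IsUnit x ↔ IsUnit (e x) := fun x =>
    ⟨fun h => h.map e, fun h => by
      have := h.map e.symm
      simpa using this⟩
  have E1 : {p : AdjoinRoot (X ^ 2 - X : K[X]) × AdjoinRoot (X ^ 2 - X : K[X]) //
        IsUnit (1 + p.1 * p.2)} ≃
      {p : (K × K) × (K × K) // IsUnit (1 + p.1 * p.2)} :=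
    Equiv.subtypeEquiv (Equiv.prodCongr e.toEquiv e.toEquiv) (fun p => by
      rw [hiso]
      simp [map_add, map_one, map_mul])
  have E2 : {p : (K × K) × (K × K) // IsUnit (1 + p.1 * p.2)} ≃
      {p : K × K // 1 + p.1 * p.2 ≠ 0} × {p : K × K // 1 + p.1 * p.2 ≠ 0} := by
    refine (Equiv.subtypeEquiv (Equiv.prodProdProdComm K K K K) ?_).trans
      Equiv.subtypeProdEquivProd
    rintro ⟨⟨a, b⟩, ⟨c, d'⟩⟩
    simp [my_prod_isUnit_iff, isUnit_iff_ne_zero]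
  rw [Nat.card_congr (E1.trans E2), Nat.card_eq_fintype_card, Fintype.card_prod,
    myCount K, hK]
  have h1 : 1 ≤ q ^ d := hK ▸ Fintype.card_pos
  have h2 : q ^ d - 1 ≤ q ^ d * q ^ d :=
    le_trans (Nat.sub_le _ 1) (Nat.le_mul_of_pos_left _ h1)
  rw [Nat.cast_mul, Nat.cast_sub h2, Nat.cast_sub h1, Nat.cast_mul, Nat.cast_one]
  have e4 : (q : ℤ) ^ (4 * d) = ((q : ℤ) ^ d) ^ 4 := by rw [mul_comm, pow_mul]
  have e3 : (q : ℤ) ^ (3 * d) = ((q : ℤ) ^ d) ^ 3 := by rw [mul_comm, pow_mul]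
  have e2 : (q : ℤ) ^ (2 * d) = ((q : ℤ) ^ d) ^ 2 := by rw [mul_comm, pow_mul]
  rw [e4, e3, e2]
  push_cast
  ring
end

section
/- Let q ≡ 1 (mod 4) be a prime power, written q = 2^{A+1} m + 1 with A ≥ 1 and m odd. For n ≥ A+1, the multiplicative order of q modulo 2^{n+1} is 2^{n-A}, and x^{2^n} + 1 factors over F_q as the product over all primitive 2^{A+1}-th roots of unity u in F_q of the irreducible binomials x^{2^{n-A}} + u. -/
open Polynomial

private lemma aux_pow_two_pow {A m : ℕ} (hA : 1 ≤ A) (hm : Odd m) (q : ℕ)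
    (hq : q = 2 ^ (A + 1) * m + 1) :
    ∀ k, ∃ c, Odd c ∧ q ^ (2 ^ k) = 2 ^ (A + 1 + k) * c + 1 := by
  intro k
  induction k with
  | zero => exact ⟨m, hm, by simpa using hq⟩
  | succ k ih =>
    obtain ⟨c, hc, hqc⟩ := ih
    refine ⟨c + 2 ^ (A + k) * c ^ 2, ?_, ?_⟩
    · refine hc.add_even (Even.mul_right ?_ _)
      have h1 : (2:ℕ) ^ (A + k) = 2 * 2 ^ (A + k - 1) := by
        rw [← pow_succ']
        congr 1
        omega
      exact ⟨2 ^ (A + k - 1), by omega⟩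
    · have h2 : q ^ 2 ^ (k + 1) = (q ^ 2 ^ k) ^ 2 := by
        rw [← pow_mul, ← pow_succ]
      have h3 : (2:ℕ) ^ (A + 1 + k + 1) * 2 ^ (A + k) = 2 ^ (A + 1 + k) * 2 ^ (A + 1 + k) := by
        rw [← pow_add, ← pow_add]
        congr 1
        omega
      have h4 : A + 1 + (k + 1) = A + 1 + k + 1 := by omega
      have h5 : (2:ℕ) ^ (A + 1 + k) = 2 * 2 ^ (A + k) := by
        rw [← pow_succ']
        congr 1
        omega
      rw [h2, hqc, h4, pow_succ, h5]
      ring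

private lemma aux_ord {q A m : ℕ} (hA : 1 ≤ A) (hm : Odd m)
    (hq : q = 2 ^ (A + 1) * m + 1) {N : ℕ} (hN : A + 1 ≤ N) :
    orderOf (q : ZMod (2 ^ N)) = 2 ^ (N - (A + 1)) := by
  set r := N - (A + 1) with hr
  have hNr : A + 1 + r = N := by omega
  obtain ⟨c, hc, hqc⟩ := aux_pow_two_pow hA hm q hq r
  have h1 : (q : ZMod (2 ^ N)) ^ 2 ^ r = 1 := by
    rw [← Nat.cast_pow, hqc, hNr, Nat.cast_add, Nat.cast_mul, Nat.cast_pow, Nat.cast_ofNat,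
      Nat.cast_one]
    have : ((2 : ZMod (2 ^ N)) ^ N) = 0 := by
      have := ZMod.natCast_self (2 ^ N)
      push_cast at this
      exact this
    rw [this, zero_mul, zero_add]
  have hdvd := orderOf_dvd_of_pow_eq_one h1
  obtain ⟨i, hi, hio⟩ := (Nat.dvd_prime_pow Nat.prime_two).mp hdvd
  rw [hio]
  congr 1
  by_contra hne
  have hilt : i < r := lt_of_le_of_ne hi hne
  have hdvd2 : orderOf (q : ZMod (2 ^ N)) ∣ 2 ^ (r - 1) := by
    rw [hio]
    exact pow_dvd_pow 2 (by omega)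
  have h2 : (q : ZMod (2 ^ N)) ^ 2 ^ (r - 1) = 1 := orderOf_dvd_iff_pow_eq_one.mp hdvd2
  obtain ⟨c', hc', hqc'⟩ := aux_pow_two_pow hA hm q hq (r - 1)
  have hexp : A + 1 + (r - 1) = N - 1 := by omega
  rw [← Nat.cast_pow, hqc', hexp, Nat.cast_add, Nat.cast_one, add_eq_right] at h2
  rw [show ((2 ^ (N - 1) * c' : ℕ) : ZMod (2 ^ N)) = (((2 ^ (N - 1) * c' : ℕ) : ℕ) : ZMod (2 ^ N))
    from rfl, ZMod.natCast_eq_zero_iff] at h2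
  have hNpos : 1 ≤ N := by omega
  have h5 : (2:ℕ) ^ N = 2 ^ (N - 1) * 2 := by
    rw [← pow_succ]
    congr 1
    omega
  rw [h5] at h2
  have h6 : 2 ∣ c' := (mul_dvd_mul_iff_left (a := (2:ℕ) ^ (N - 1))
    (pow_ne_zero _ two_ne_zero)).mp h2
  obtain ⟨t, ht⟩ := h6
  have := Nat.odd_iff.mp hc'
  omega

private lemma aux_dvd {q A m : ℕ} (hA : 1 ≤ A) (hm : Odd m)
    (hq : q = 2 ^ (A + 1) * m + 1) {N s : ℕ} (hN : A + 1 ≤ N) :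
    2 ^ N ∣ q ^ s - 1 ↔ 2 ^ (N - (A + 1)) ∣ s := by
  have hq1 : 1 ≤ q := by omega
  have hqs : q ^ s - 1 + 1 = q ^ s := Nat.sub_add_cancel (Nat.one_le_pow _ _ (by omega))
  have hc : ((q : ZMod (2 ^ N))) ^ s = ((q ^ s - 1 : ℕ) : ZMod (2 ^ N)) + 1 := by
    rw [← Nat.cast_one (R := ZMod (2 ^ N)), ← Nat.cast_add, hqs, Nat.cast_pow]
  have key : 2 ^ N ∣ q ^ s - 1 ↔ (q : ZMod (2 ^ N)) ^ s = 1 := by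
    rw [hc, add_eq_right, ZMod.natCast_eq_zero_iff]
  rw [key, ← orderOf_dvd_iff_pow_eq_one, aux_ord hA hm hq hN]

private lemma order_two_eq_neg_one {K : Type*} [Field K] {x : K} (h : orderOf x = 2) :
    x = -1 := by
  have h2 : x ^ 2 = 1 := by rw [← h]; exact pow_orderOf_eq_one x
  have hx1 : x ≠ 1 := by
    rintro rfl
    simp at h
  have h3 : (x - 1) * (x + 1) = 0 := by linear_combination h2
  rcases mul_eq_zero.mp h3 with h' | h'
  · exact absurd (sub_eq_zero.mp h') hx1
  · exact eq_neg_of_add_eq_zero_left h'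

private lemma pow_2A_eq_neg_one {K : Type*} [Field K] {A : ℕ} {u : K}
    (hu : orderOf u = 2 ^ (A + 1)) : u ^ 2 ^ A = -1 := by
  apply order_two_eq_neg_one
  rw [orderOf_pow' u (pow_ne_zero _ two_ne_zero), hu, pow_succ, Nat.gcd_comm,
    Nat.gcd_eq_left (dvd_mul_right _ _), Nat.mul_div_cancel_left _ (pow_pos two_pos A)]

private lemma neg_one_ne {K : Type*} [Field K] {A : ℕ} {u : K}
    (hu : orderOf u = 2 ^ (A + 1)) : (-1 : K) ≠ 1 := by
  intro h
  have h1 : u ^ 2 ^ A = 1 := by rw [pow_2A_eq_neg_one hu, h]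
  have h2 := orderOf_dvd_of_pow_eq_one h1
  rw [hu] at h2
  have h3 := Nat.le_of_dvd (pow_pos two_pos _) h2
  have h4 := Nat.pow_lt_pow_right one_lt_two (Nat.lt_succ_self A)
  omega

private lemma neg_ord {K : Type*} [Field K] {A : ℕ} (hA : 1 ≤ A) {u : K}
    (hu : orderOf u = 2 ^ (A + 1)) : orderOf (-u) = 2 ^ (A + 1) := by
  haveI : Fact (Nat.Prime 2) := ⟨Nat.prime_two⟩
  have hEA : Even ((2:ℕ) ^ A) := (Nat.even_pow).mpr ⟨even_two, by omega⟩
  have hEA1 : Even ((2:ℕ) ^ (A + 1)) := (Nat.even_pow).mpr ⟨even_two, by omega⟩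
  apply orderOf_eq_prime_pow (n := A)
  · rw [hEA.neg_pow, pow_2A_eq_neg_one hu]
    exact neg_one_ne hu
  · rw [hEA1.neg_pow, ← hu]
    exact pow_orderOf_eq_one u

private lemma irred_aux {q A m : ℕ} (hA : 1 ≤ A) (hm : Odd m)
    (hqAm : q = 2 ^ (A + 1) * m + 1)
    {F : Type} [Field F] [Fintype F] (hF : Fintype.card F = q) (k : ℕ)
    {u : F} (hu : orderOf u = 2 ^ (A + 1)) :
    Irreducible (X ^ 2 ^ k + C u : F[X]) := by
  haveI : Fact (Nat.Prime 2) := ⟨Nat.prime_two⟩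
  have key : (X ^ 2 ^ k + C u : F[X]) = X ^ 2 ^ k - C (-u) := by
    rw [map_neg, sub_neg_eq_add]
  rw [key]
  have haord : orderOf (-u) = 2 ^ (A + 1) := neg_ord hA hu
  have h2k : 0 < 2 ^ k := pow_pos two_pos k
  have hp0 : (X ^ 2 ^ k - C (-u) : F[X]) ≠ 0 := X_pow_sub_C_ne_zero h2k _
  have hpu : ¬ IsUnit (X ^ 2 ^ k - C (-u) : F[X]) := by
    rw [Polynomial.isUnit_iff_degree_eq_zero, degree_X_pow_sub_C h2k]
    exact_mod_cast h2k.ne'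
  obtain ⟨g, hg, hgd⟩ := WfDvdMonoid.exists_irreducible_factor hpu hp0
  haveI : Fact (Irreducible g) := ⟨hg⟩
  have hg0 : g ≠ 0 := hg.ne_zero
  set E := AdjoinRoot g with hE
  let pb := AdjoinRoot.powerBasis hg0
  haveI : Fintype E := Module.fintypeOfFintype pb.basis
  haveI : DecidableEq E := Classical.decEq E
  have hs0 : 0 < g.natDegree := hg.natDegree_pos
  have hcard : Fintype.card E = q ^ g.natDegree := by
    rw [Module.card_fintype pb.basis, hF, Fintype.card_fin]
    congr 1
  set α := AdjoinRoot.root g with hα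
  have hroot : (aeval α) (X ^ 2 ^ k - C (-u)) = 0 := by
    rw [AdjoinRoot.aeval_eq, AdjoinRoot.mk_eq_zero]
    exact hgd
  have hαe : α ^ 2 ^ k = algebraMap F E (-u) := by
    have h := hroot
    rw [map_sub, map_pow, aeval_X, aeval_C, sub_eq_zero] at h
    exact h
  have hinj : Function.Injective (algebraMap F E) := (algebraMap F E).injective
  have hEa : orderOf (algebraMap F E (-u)) = 2 ^ (A + 1) := by
    rw [← haord]
    exact orderOf_injective (algebraMap F E).toMonoidHom hinj (-u)
  have hne : (-1 : E) ≠ 1 := neg_one_ne hEa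
  have hαord : orderOf α = 2 ^ (A + k + 1) := by
    apply orderOf_eq_prime_pow
    · have h7 : (2:ℕ) ^ (A + k) = 2 ^ k * 2 ^ A := by rw [← pow_add]; congr 1; omega
      rw [h7, pow_mul, hαe, pow_2A_eq_neg_one hEa]
      exact hne
    · have h8 : (2:ℕ) ^ (A + k + 1) = 2 ^ k * 2 ^ (A + 1) := by rw [← pow_add]; congr 1; omega
      rw [h8, pow_mul, hαe, ← map_pow, ← hu]
      rw [show (-u) ^ orderOf u = (-u) ^ orderOf (-u) by rw [hu, haord], pow_orderOf_eq_one,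
        map_one]
  have ha0 : (-u : F) ≠ 0 := by
    intro h0
    have h9 := pow_orderOf_eq_one (-u)
    rw [haord, h0, zero_pow (pow_pos two_pos _).ne'] at h9
    exact zero_ne_one h9
  have hα0 : α ≠ 0 := by
    intro h
    apply ha0
    apply hinj
    rw [← hαe, h, zero_pow h2k.ne', map_zero]
  have hudvd : 2 ^ (A + k + 1) ∣ q ^ g.natDegree - 1 := by
    rw [← hαord, ← hcard, ← Fintype.card_units]
    have hdc := orderOf_dvd_card (G := Eˣ) (x := Units.mk0 α hα0)
    rwa [← orderOf_units, Units.val_mk0] at hdc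
  have hkdvd : 2 ^ k ∣ g.natDegree := by
    have h10 := (aux_dvd hA hm hqAm (N := A + k + 1) (by omega) (s := g.natDegree)).mp hudvd
    have h11 : A + k + 1 - (A + 1) = k := by omega
    rwa [h11] at h10
  have hle : g.natDegree ≤ 2 ^ k := by
    have h12 := natDegree_le_of_dvd hgd hp0
    rwa [natDegree_X_pow_sub_C] at h12
  have hsk : g.natDegree = 2 ^ k := Nat.le_antisymm hle (Nat.le_of_dvd hs0 hkdvd)
  exact (associated_of_dvd_of_natDegree_le hgd hp0
    (by rw [natDegree_X_pow_sub_C, ← hsk])).irreducible hg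

private lemma prod_aux {q A m : ℕ} (hA : 1 ≤ A) (hm : Odd m)
    (hqAm : q = 2 ^ (A + 1) * m + 1)
    {F : Type} [Field F] [Fintype F] [DecidableEq F] (hF : Fintype.card F = q) :
    (X ^ 2 ^ A + 1 : F[X])
      = ∏ u ∈ Finset.univ.filter (fun u : F => orderOf u = 2 ^ (A + 1)), (X - C u) := by
  haveI : Fact (Nat.Prime 2) := ⟨Nat.prime_two⟩
  have hm0 : m ≠ 0 := by rintro rfl; simp [Nat.odd_iff] at hm
  -- find a primitive 2^(A+1)-th root of unity
  obtain ⟨g, hgen⟩ := IsCyclic.exists_generator (α := Fˣ)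
  have hgord : orderOf g = 2 ^ (A + 1) * m := by
    rw [orderOf_eq_card_of_forall_mem_zpowers hgen, Nat.card_eq_fintype_card,
      Fintype.card_units, hF, hqAm]
    omega
  set ζ : F := ((g ^ m : Fˣ) : F) with hζ
  have hζord : orderOf ζ = 2 ^ (A + 1) := by
    rw [hζ, orderOf_units, orderOf_pow' g hm0, hgord, Nat.gcd_comm,
      Nat.gcd_eq_left (dvd_mul_left _ _), Nat.mul_div_cancel _ (Nat.pos_of_ne_zero hm0)]
  have hprim : IsPrimitiveRoot ζ (2 ^ (A + 1)) := hζord ▸ IsPrimitiveRoot.orderOf ζ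
  have hζ2ord : orderOf (ζ ^ 2) = 2 ^ A := by
    rw [orderOf_pow' ζ two_ne_zero, hζord, pow_succ, Nat.gcd_comm,
      Nat.gcd_eq_left (dvd_mul_left _ _), Nat.mul_div_cancel _ two_pos]
  have hprim2 : IsPrimitiveRoot (ζ ^ 2) (2 ^ A) := hζ2ord ▸ IsPrimitiveRoot.orderOf (ζ ^ 2)
  have hpos1 : 0 < 2 ^ (A + 1) := pow_pos two_pos _
  have hpos2 : 0 < 2 ^ A := pow_pos two_pos _
  have hfact1 := X_pow_sub_one_eq_prod (R := F) hpos1 hprim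
  have hfact2 := X_pow_sub_one_eq_prod (R := F) hpos2 hprim2
  have hsub : nthRootsFinset (2 ^ A) (1 : F) ⊆ nthRootsFinset (2 ^ (A + 1)) (1 : F) := by
    intro x hx
    rw [mem_nthRootsFinset hpos1]
    rw [mem_nthRootsFinset hpos2] at hx
    rw [pow_succ, pow_mul, hx, one_pow]
  have hsd : (X ^ 2 ^ (A + 1) - 1 : F[X])
      = (∏ w ∈ nthRootsFinset (2 ^ (A + 1)) (1 : F) \ nthRootsFinset (2 ^ A) (1 : F), (X - C w))
        * (X ^ 2 ^ A - 1) := by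
    rw [hfact1, hfact2, Finset.prod_sdiff hsub]
  have hsplit : (X ^ 2 ^ (A + 1) - 1 : F[X]) = (X ^ 2 ^ A + 1) * (X ^ 2 ^ A - 1) := by
    rw [pow_succ, pow_mul]
    ring
  have hne0 : (X ^ 2 ^ A - 1 : F[X]) ≠ 0 := by
    have := X_pow_sub_C_ne_zero (R := F) hpos2 1
    rwa [map_one] at this
  have hcancel : (X ^ 2 ^ A + 1 : F[X])
      = ∏ w ∈ nthRootsFinset (2 ^ (A + 1)) (1 : F) \ nthRootsFinset (2 ^ A) (1 : F), (X - C w) := by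
    apply mul_right_cancel₀ hne0
    rw [← hsplit, hsd]
  have hset : nthRootsFinset (2 ^ (A + 1)) (1 : F) \ nthRootsFinset (2 ^ A) (1 : F)
      = Finset.univ.filter (fun u : F => orderOf u = 2 ^ (A + 1)) := by
    ext w
    simp only [Finset.mem_sdiff, mem_nthRootsFinset hpos1, mem_nthRootsFinset hpos2,
      Finset.mem_filter, Finset.mem_univ, true_and]
    constructor
    · rintro ⟨h1, h2⟩
      exact orderOf_eq_prime_pow h2 h1
    · intro h
      constructor
      · rw [← h]; exact pow_orderOf_eq_one w
      · intro h2
        have h3 := orderOf_dvd_of_pow_eq_one h2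
        rw [h] at h3
        have h4 := Nat.le_of_dvd hpos2 h3
        have h5 := Nat.pow_lt_pow_right one_lt_two (Nat.lt_succ_self A)
        omega
  rw [hcancel, hset]

/-- Let `q ≡ 1 (mod 4)` be a prime power, `q = 2^(A+1) m + 1` with
`A ≥ 1`, `m` odd. For `n ≥ A + 1`, the multiplicative order of `q` modulo
`2^(n+1)` is `2^(n-A)`, and `x^(2^n) + 1` factors over `F_q` as the product over
all primitive `2^(A+1)`-th roots of unity `u ∈ F_q` of the irreducible binomials
`x^(2^(n-A)) + u`. -/
theorem stmt_17 (q A m n : ℕ) (hq : IsPrimePow q) (hq4 : q % 4 = 1)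
    (hA : 1 ≤ A) (hm : Odd m) (hqAm : q = 2 ^ (A + 1) * m + 1) (hn : A + 1 ≤ n)
    (F : Type) [Field F] [Fintype F] [DecidableEq F] (hF : Fintype.card F = q) :
    orderOf (q : ZMod (2 ^ (n + 1))) = 2 ^ (n - A)
    ∧ (X ^ (2 ^ n) + 1 : F[X])
        = ∏ u ∈ Finset.univ.filter (fun u : F => orderOf u = 2 ^ (A + 1)),
            (X ^ (2 ^ (n - A)) + C u)
    ∧ ∀ u : F, orderOf u = 2 ^ (A + 1) →
        Irreducible (X ^ (2 ^ (n - A)) + C u : F[X]) := by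
  refine ⟨?_, ?_, fun u hu => irred_aux hA hm hqAm hF (n - A) hu⟩
  · have h := aux_ord hA hm hqAm (N := n + 1) (by omega)
    rwa [show n + 1 - (A + 1) = n - A by omega] at h
  · have hprod := prod_aux hA hm hqAm hF
    have hre : (∏ u ∈ Finset.univ.filter (fun u : F => orderOf u = 2 ^ (A + 1)), (X - C u))
        = ∏ u ∈ Finset.univ.filter (fun u : F => orderOf u = 2 ^ (A + 1)), (X + C u) := by
      apply Finset.prod_nbij' (fun u => -u) (fun u => -u)
      · intro a ha
        simp only [Finset.mem_filter, Finset.mem_univ, true_and] at ha ⊢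
        exact neg_ord hA ha
      · intro a ha
        simp only [Finset.mem_filter, Finset.mem_univ, true_and] at ha ⊢
        exact neg_ord hA ha
      · intro a _; simp
      · intro a _; simp
      · intro a _
        rw [map_neg, ← sub_eq_add_neg]
    rw [hre] at hprod
    have hcomp := congrArg (fun p : F[X] => p.comp (X ^ 2 ^ (n - A))) hprod
    simp only [add_comp, pow_comp, X_comp, one_comp, C_comp, prod_comp] at hcomp
    rw [← pow_mul, ← pow_add, show n - A + A = n by omega] at hcomp
    exact hcomp
end

section
/- Let q = 5 and n ≥ 2. Then x^{2^n} + 1 = (x^{2^{n-1}} + 2)(x^{2^{n-1}} + 3) in F_5[x], and both factors are irreducible over F_5. -/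
open Polynomial IntermediateField

lemma aux_pow_two_irreducible {K : Type} [Field K] {a : K}
    (ha : ∀ b : K, b ^ 2 ≠ a) (ha' : ∀ b : K, b ^ 2 ≠ -a) (k : ℕ) :
    Irreducible (X ^ (2 ^ k) - C a) := by
  induction k generalizing K a with
  | zero => simpa using irreducible_X_sub_C a
  | succ k IH =>
    have h2 : (2 : ℕ) ^ (k + 1) = 2 ^ k * 2 := by ring
    rw [h2]
    apply X_pow_mul_sub_C_irreducible
      (X_pow_sub_C_irreducible_of_prime Nat.prime_two ha)
    intro E _ _ x hx
    have hint : IsIntegral K x := not_not.mp fun h ↦ by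
      simpa only [degree_zero, degree_X_pow_sub_C Nat.zero_lt_two,
        WithBot.natCast_ne_bot] using congr_arg degree (hx.symm.trans (dif_neg h))
    have hfr : Module.finrank K K⟮x⟯ = 2 := by
      rw [adjoin.finrank hint, hx, natDegree_X_pow_sub_C]
    have hnorm : Algebra.norm K (AdjoinSimple.gen K x) = -a := by
      rw [← adjoin.powerBasis_gen hint,
        Algebra.PowerBasis.norm_gen_eq_coeff_zero_minpoly]
      simp [minpoly_gen, hx]
    have hnorm' : Algebra.norm K (-(AdjoinSimple.gen K x)) = -a := by
      rw [← neg_one_mul, map_mul, show ((-1 : K⟮x⟯)) = algebraMap K K⟮x⟯ (-1) from by rw [map_neg, map_one],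
        Algebra.norm_algebraMap, hfr, hnorm]
      ring
    apply IH
    · intro b hb
      apply ha' (Algebra.norm K b)
      rw [← map_pow, hb, hnorm]
    · intro b hb
      apply ha' (Algebra.norm K b)
      rw [← map_pow, hb, hnorm']

/-- For `q = 5` and `n ≥ 2`,
`x^(2^n) + 1 = (x^(2^(n-1)) + 2)(x^(2^(n-1)) + 3)` in `F_5[x]`, and both factors
are irreducible over `F_5`. -/
theorem stmt_18 (n : ℕ) (hn : 2 ≤ n) :
    (X ^ (2 ^ n) + 1 : (ZMod 5)[X])
        = (X ^ (2 ^ (n - 1)) + C 2) * (X ^ (2 ^ (n - 1)) + C 3)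
    ∧ Irreducible (X ^ (2 ^ (n - 1)) + C 2 : (ZMod 5)[X])
    ∧ Irreducible (X ^ (2 ^ (n - 1)) + C 3 : (ZMod 5)[X]) := by
  have h1 : ∀ b : ZMod 5, b ^ 2 ≠ 3 := by decide
  have h2 : ∀ b : ZMod 5, b ^ 2 ≠ -3 := by decide
  have h3 : ∀ b : ZMod 5, b ^ 2 ≠ 2 := by decide
  have h4 : ∀ b : ZMod 5, b ^ 2 ≠ -2 := by decide
  have e2 : (C 2 : (ZMod 5)[X]) = - C 3 := by
    rw [← C_neg, show (-3 : ZMod 5) = 2 from by decide]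
  have e3 : (C 3 : (ZMod 5)[X]) = - C 2 := by
    rw [← C_neg, show (-2 : ZMod 5) = 3 from by decide]
  have hpow : 2 ^ n = 2 ^ (n - 1) * 2 := by
    rw [← pow_succ]
    congr 1
    omega
  have h5 : (C 2 + C 3 : (ZMod 5)[X]) = 0 := by
    rw [← C_add, show (2 + 3 : ZMod 5) = 0 from by decide, C_0]
  have h6 : (C 2 * C 3 : (ZMod 5)[X]) = 1 := by
    rw [← C_mul, show (2 * 3 : ZMod 5) = 1 from by decide, C_1]
  haveI : Fact (Nat.Prime 5) := ⟨by norm_num⟩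
  refine ⟨?_, ?_, ?_⟩
  · rw [hpow, pow_mul]
    calc (X ^ 2 ^ (n - 1) : (ZMod 5)[X]) ^ 2 + 1
        = (X ^ 2 ^ (n - 1)) ^ 2 + (C 2 + C 3) * X ^ 2 ^ (n - 1) + C 2 * C 3 := by
          rw [h5, h6]; ring
      _ = (X ^ (2 ^ (n - 1)) + C 2) * (X ^ (2 ^ (n - 1)) + C 3) := by ring
  · rw [e2, ← sub_eq_add_neg]
    exact aux_pow_two_irreducible (K := ZMod 5) h1 h2 (n - 1)
  · rw [e3, ← sub_eq_add_neg]
    exact aux_pow_two_irreducible (K := ZMod 5) h3 h4 (n - 1)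
end
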